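/- Let ℓ > 0, n ∈ ℕ with n ≥ 2, and let φ : (ℝ^d)^n → ℝ be a symmetric continuous function with lim_{|x₁|→∞} sup_{(x₂,…,x_n)∈(ℝ^d)^{n−1}} |φ(x₁,x₂,…,x_n)| / ∏_{i=1}^n (1+|x_i|^{ℓ/2}) = 0. For μ̃ ∈ 𝒫_ℓ(ℝ^d) define δU/δm(μ̃,x₁) = n ∫_{(ℝ^d)^{n−1}} (φ(x₁,x₂,…,x_n) − φ(0,x₂,…,x_n)) μ̃(dx₂)⋯μ̃(dx_n). Then for every μ ∈ 𝒫_ℓ(ℝ^d) and r > 0 there exists a finite constant C̃ not depending on μ₁, μ₂ such that for all μ₁, μ₂ in the W_ℓ-ball B(μ,r), sup_{x₁∈ℝ^d} |δU/δm(μ₂,x₁) − δU/δm(μ₁,x₁)| / (1+|x₁|^{ℓ/2}) ≤ C̃ ∫_{ℝ^d} (1+|x|^{ℓ/2}) |μ₂−μ₁|(dx); i.e. hypothesis RU6 holds with α = 1. -/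

import Mathlib

open MeasureTheory ProbabilityTheory Filter ENNReal Topology

noncomputable section

/-- `ℝ^d` with the Euclidean norm. -/
abbrev Euc (d : ℕ) := EuclideanSpace ℝ (Fin d)

namespace Paper

variable {E : Type*} [MeasurableSpace E]

/-- The set of couplings between two measures. -/
def couplings (μ ν : Measure E) : Set (Measure (E × E)) :=
  {ρ | IsProbabilityMeasure ρ ∧ ρ.map Prod.fst = μ ∧ ρ.map Prod.snd = ν}

/-- The `ℓ`-Wasserstein distance `W_ℓ` (in `ℝ≥0∞`), for `ℓ > 0` with cost `dist^ℓ` and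
exponent `1/(ℓ ∨ 1)`, and for `ℓ = 0` with cost `1 ∧ dist`. -/
def Wl [PseudoMetricSpace E] (ℓ : ℝ) (μ ν : Measure E) : ℝ≥0∞ :=
  ⨅ ρ ∈ couplings μ ν,
    if ℓ = 0 then ∫⁻ p, ENNReal.ofReal (min 1 (dist p.1 p.2)) ∂ρ
    else (∫⁻ p, ENNReal.ofReal (dist p.1 p.2 ^ ℓ) ∂ρ) ^ (1 / max ℓ 1)

variable [NormedAddCommGroup E]

/-- Membership in the Wasserstein space `𝒫_ℓ`. -/
def MemP (ℓ : ℝ) (μ : Measure E) : Prop :=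
  IsProbabilityMeasure μ ∧ ∫⁻ x, ENNReal.ofReal (‖x‖ ^ ℓ) ∂μ < ⊤

/-- The `W_ℓ`-ball of radius `r` centered at `μ`, inside `𝒫_ℓ`. -/
def ball (ℓ : ℝ) (μ : Measure E) (r : ℝ) : Set (Measure E) :=
  {m | MemP ℓ m ∧ Wl ℓ m μ < ENNReal.ofReal r}

/-- The average `(1/N) ∑_{i=1}^N ν_i` (indexing `ν 0 = ν_1`). -/
def avg (ν : ℕ → Measure E) (N : ℕ) : Measure E :=
  (N : ℝ≥0∞)⁻¹ • ∑ i ∈ Finset.range N, ν i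

/-- The empirical measure `μ_N = (1/N) ∑_{i=1}^N δ_{X_i}` (indexing `X 0 = X_1`). -/
def emp {Ω : Type*} (X : ℕ → Ω → E) (N : ℕ) (ω : Ω) : Measure E :=
  (N : ℝ≥0∞)⁻¹ • ∑ i ∈ Finset.range N, Measure.dirac (X i ω)

/-- Condition TX: there is `β ∈ (0,1)` with
`∑_{i≥1} (1/i) E((|X_i|^ℓ - i^β) 1_{|X_i|^ℓ > i^β}) < ∞` (indexing `X 0 = X_1`). -/
def TX {Ω : Type*} [MeasurableSpace Ω] (Pr : Measure Ω) (X : ℕ → Ω → E) (ℓ : ℝ) : Prop :=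
  ∃ β ∈ Set.Ioo (0:ℝ) 1,
    (∑' i : ℕ, ((i : ℝ≥0∞) + 1)⁻¹ *
      ∫⁻ ω in {ω | ((i : ℝ) + 1) ^ β < ‖X i ω‖ ^ ℓ},
        ENNReal.ofReal (‖X i ω‖ ^ ℓ - ((i : ℝ) + 1) ^ β) ∂Pr) < ⊤

/-- The total variation measure `|μ - ν|` of the difference of two (finite) measures. -/
def mdiff (μ ν : Measure E) : Measure E := (μ - ν) + (ν - μ)

/-- The norm `‖μ - ν‖_ℓ = sup {∫ f d(μ-ν) : f measurable, |f| ≤ 1 + |x|^ℓ}`. -/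
def normLdiff (ℓ : ℝ) (μ ν : Measure E) : ℝ :=
  sSup {c | ∃ f : E → ℝ, Measurable f ∧ (∀ x, |f x| ≤ 1 + ‖x‖ ^ ℓ) ∧
    c = ∫ x, f x ∂μ - ∫ x, f x ∂ν}

/-- Integral of `f` against a signed measure. -/
def sInt (τ : SignedMeasure E) (f : E → ℝ) : ℝ :=
  ∫ x, f x ∂τ.toJordanDecomposition.posPart - ∫ x, f x ∂τ.toJordanDecomposition.negPart

/-- `U` admits `DU` as linear functional derivative at `μ` (on `𝒫_ℓ`). -/
def HasLFDAt (ℓ : ℝ) (U : Measure E → ℝ) (μ : Measure E) (DU : E → ℝ) : Prop :=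
  Measurable DU ∧ (∃ C : ℝ, ∀ y, |DU y| ≤ C * (1 + ‖y‖ ^ ℓ)) ∧
    ∀ ν : Measure E, MemP ℓ ν →
      HasDerivWithinAt (fun ε : ℝ => U (ENNReal.ofReal (1 - ε) • μ + ENNReal.ofReal ε • ν))
        ((∫ y, DU y ∂ν) - ∫ y, DU y ∂μ) (Set.Ici 0) 0

/-- RU1: `U` admits a linear functional derivative `DU m` at every `m` in the ball `B(μ,r)`. -/
def RU1 (ℓ r : ℝ) (U : Measure E → ℝ) (μ : Measure E) (DU : Measure E → E → ℝ) : Prop :=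
  ∀ m ∈ ball ℓ μ r, HasLFDAt ℓ U m (DU m)

/-- RU2: uniform growth bound `|δU/δm(m,x)| ≤ C (1+|x|^{ℓ/2})` on the ball. -/
def RU2 (ℓ r : ℝ) (μ : Measure E) (DU : Measure E → E → ℝ) : Prop :=
  ∃ C : ℝ, ∀ m ∈ ball ℓ μ r, ∀ x, |DU m x| ≤ C * (1 + ‖x‖ ^ (ℓ / 2))

/-- RU3: `sup_x |δU/δm(m,x) - δU/δm(μ,x)|/(1+|x|^{ℓ/2}) → 0` as `W_ℓ(m,μ) → 0`. -/
def RU3 (ℓ r : ℝ) (μ : Measure E) (DU : Measure E → E → ℝ) : Prop :=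
  ∀ ε > (0:ℝ), ∃ δ > (0:ℝ), ∀ m ∈ ball ℓ μ r, Wl ℓ m μ < ENNReal.ofReal δ →
    ∀ x, |DU m x - DU μ x| ≤ ε * (1 + ‖x‖ ^ (ℓ / 2))

/-- RU4: `x ↦ δU/δm(μ,x)` is continuous `μ`-a.e. -/
def RU4 (μ : Measure E) (DU : Measure E → E → ℝ) : Prop :=
  ∀ᵐ x ∂μ, ContinuousAt (DU μ) x

/-- RU5 (with exponent `α`): Hölder-type stability of the derivative on the ball. -/
def RU5 (ℓ α r : ℝ) (μ : Measure E) (DU : Measure E → E → ℝ) : Prop :=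
  ∃ C : ℝ, ∀ m₁ ∈ ball ℓ μ r, ∀ m₂ ∈ ball ℓ μ r, ∀ x,
    |DU m₂ x - DU m₁ x| ≤
      C * ((1 + ‖x‖ ^ ℓ) * (((mdiff m₂ m₁) Set.univ).toReal) ^ α +
        (1 + ‖x‖ ^ (ℓ * (1 - α))) * (∫ y, ‖y‖ ^ ℓ ∂(mdiff m₂ m₁)) ^ α)

/-- RU6 (with exponent `α`): Hölder-type stability of the derivative on the ball. -/
def RU6 (ℓ α r : ℝ) (μ : Measure E) (DU : Measure E → E → ℝ) : Prop :=
  ∃ C : ℝ, ∀ m₁ ∈ ball ℓ μ r, ∀ m₂ ∈ ball ℓ μ r, ∀ x,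
    |DU m₂ x - DU m₁ x| ≤
      C * (∫ y, (1 + ‖y‖ ^ (ℓ / (2 * α))) ∂(mdiff m₂ m₁)) ^ α * (1 + ‖x‖ ^ (ℓ / 2))

/-- Lyapunov condition L1: `PV(x) ≤ γ V(x) + K`. -/
def Lyap1 (P : Kernel E E) (V : E → ℝ) (γ K : ℝ) : Prop :=
  ∀ x, ∫⁻ y, ENNReal.ofReal (V y) ∂(P x) ≤ ENNReal.ofReal (γ * V x + K)

/-- Lyapunov minorization condition: `(P(x,·) ∧ P(y,·))(ℝ^d) ≥ ρ` when `V(x)+V(y) ≤ R`. -/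
def Lyap2 (P : Kernel E E) (V : E → ℝ) (R ρ : ℝ) : Prop :=
  ∀ x y, V x + V y ≤ R → ENNReal.ofReal ρ ≤ (P x ⊓ P y) Set.univ

/-- The full Lyapunov condition with data `(V, γ, K, R, ρ)`. -/
def Lyapunov (P : Kernel E E) (V : E → ℝ) (γ K R ρ : ℝ) : Prop :=
  Measurable V ∧ (∀ x, 0 ≤ V x) ∧ γ ∈ Set.Ioo (0:ℝ) 1 ∧ 0 ≤ K ∧
    2 * K / (1 - γ) < R ∧ ρ ∈ Set.Ioc (0:ℝ) 1 ∧ Lyap1 P V γ K ∧ Lyap2 P V R ρ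

/-- `n` steps of the kernel `P` starting from the measure `σ`, i.e. `σ Pⁿ`. -/
def kIter (P : Kernel E E) (σ : Measure E) : ℕ → Measure E
  | 0 => σ
  | n + 1 => (kIter P σ n).bind (⇑P)

/-- `Pⁿ f (x)`. -/
def Pn (P : Kernel E E) (n : ℕ) (f : E → ℝ) (x : E) : ℝ :=
  ∫ y, f y ∂(kIter P (Measure.dirac x) n)

/-- The contraction factor `χ(ρ,β,γ,K,R)`. -/
def chi (ρ β γ K R : ℝ) : ℝ :=
  max (1 - ρ + β * K) ((2 + β * γ * R + 2 * β * K) / (2 + β * R))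

/-- The distance `d_{V,β}(θ,σ) = sup {|θ(φ) - σ(φ)| : ‖φ‖_{V,β} ≤ 1}`. -/
def dV (V : E → ℝ) (β : ℝ) (θ σ' : Measure E) : ℝ :=
  sSup {c | ∃ φ : E → ℝ, Measurable φ ∧ (∀ x, |φ x| ≤ 1 + β * V x) ∧
    c = |(∫ x, φ x ∂θ) - ∫ x, φ x ∂σ'|}

/-- `(X_i)_{i ≥ 1}` (indexed so that `X 0 = X_1`) is a Markov chain with initial law `ν₁`
and transition kernel `P` on the probability space `(Ω, Pr)`. -/
def IsMarkovChain {Ω : Type*} [MeasurableSpace Ω] (Pr : Measure Ω) (X : ℕ → Ω → E)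
    (ν₁ : Measure E) (P : Kernel E E) : Prop :=
  (∀ i, Measurable (X i)) ∧ Pr.map (X 0) = ν₁ ∧
    ∀ i : ℕ, ∀ A : Set E, MeasurableSet A →
      (fun ω => ((P (X i ω)) A).toReal) =ᵐ[Pr]
        Pr[fun ω => Set.indicator A (fun _ => (1:ℝ)) (X (i + 1) ω) |
          MeasurableSpace.comap (fun ω (j : Fin (i + 1)) => X j.1 ω) MeasurableSpace.pi]

/-- Convergence in distribution of the real random variables `Y N` to the law `G`. -/
def cid {Ω : Type*} [MeasurableSpace Ω] (Pr : Measure Ω) (Y : ℕ → Ω → ℝ) (G : Measure ℝ) : Prop :=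
  ∀ f : BoundedContinuousFunction ℝ ℝ,
    Tendsto (fun N => ∫ ω, f (Y N ω) ∂Pr) atTop (𝓝 (∫ x, f x ∂G))

end Paper

open Paper


/-- The linear functional derivative of the U-statistic functional associated to `φ`:
`δU/δm(m, x₁) = n ∫ (φ(x₁, rest) - φ(0, rest)) m^{⊗(n-1)}(drest)` with `n = k+1`. -/
def USderiv {d : ℕ} (k : ℕ) (φ : (Fin (k + 1) → Euc d) → ℝ) (m : Measure (Euc d))
    (x₁ : Euc d) : ℝ :=
  ((k : ℝ) + 1) *
    ∫ rest : Fin k → Euc d, (φ (Fin.cons x₁ rest) - φ (Fin.cons 0 rest))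
      ∂(Measure.pi fun _ => m)

/-!
Put `g(y) = φ(x₁, y) - φ(0, y)`, so that the difference of the two derivatives is
`n (∫ g d(m₂^{⊗(n-1)}) - ∫ g d(m₁^{⊗(n-1)}))`. Continuity, symmetry and the growth condition give
`|φ(x)| ≤ C ∏ᵢ w(xᵢ)` with `w(x) = 1 + |x|^{ℓ/2}`, hence `|g(y)| ≤ 2C w(x₁) ∏ᵢ w(yᵢ)`.
Replacing the factors `m₁` by `m₂` one coordinate at a time, each step costs at most
`∫ w d|m₂ - m₁|` times the product of the `w`-integrals of the other coordinates, and these are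
bounded uniformly on a `W_ℓ`-ball because the `ℓ`-th moments are.
-/

namespace MeasureTheory.Measure

variable {α : Type*} [MeasurableSpace α]

theorem add_sub_eq_sub_add (μ ν : Measure α) [IsFiniteMeasure μ] [IsFiniteMeasure ν] :
    μ + (ν - μ) = μ - ν + ν := by
  have h := sub_toSignedMeasure_eq_toSignedMeasure_sub (μ := μ) (ν := ν)
  rw [sub_eq_sub_iff_add_eq_add, ← toSignedMeasure_add, ← toSignedMeasure_add] at h
  exact toSignedMeasure_eq_toSignedMeasure_iff.1 h

end MeasureTheory.Measure

section TotalVariation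

variable {α : Type*} [MeasurableSpace α] {m₁ m₂ : Measure α}

theorem integrable_mdiff {f : α → ℝ} (h₁ : Integrable f m₁) (h₂ : Integrable f m₂) :
    Integrable f (mdiff m₂ m₁) :=
  (h₂.mono_measure Measure.sub_le).add_measure (h₁.mono_measure Measure.sub_le)

variable [IsFiniteMeasure m₁] [IsFiniteMeasure m₂]

theorem abs_integral_sub_integral_le_integral_mdiff {f : α → ℝ} (h₁ : Integrable f m₁)
    (h₂ : Integrable f m₂) :
    |∫ x, f x ∂m₂ - ∫ x, f x ∂m₁| ≤ ∫ x, |f x| ∂(mdiff m₂ m₁) := by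
  have h₂₁ : Integrable f (m₂ - m₁) := h₂.mono_measure Measure.sub_le
  have h₁₂ : Integrable f (m₁ - m₂) := h₁.mono_measure Measure.sub_le
  have hsplit : ∫ x, f x ∂m₂ - ∫ x, f x ∂m₁ = ∫ x, f x ∂(m₂ - m₁) - ∫ x, f x ∂(m₁ - m₂) := by
    have h := congrArg (fun ν => ∫ x, f x ∂ν) (Measure.add_sub_eq_sub_add m₂ m₁)
    simp only [integral_add_measure h₂ h₁₂, integral_add_measure h₂₁ h₁] at h
    linarith
  rw [hsplit, mdiff, integral_add_measure h₂₁.abs h₁₂.abs]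
  refine (abs_sub _ _).trans (add_le_add ?_ ?_) <;> exact abs_integral_le_integral_abs

end TotalVariation

section PiIntegral

variable {α : Type*} [MeasurableSpace α]

theorem measurable_fin_cons {n : ℕ} :
    Measurable fun p : α × (Fin n → α) => (Fin.cons p.1 p.2 : Fin (n + 1) → α) :=
  measurable_pi_iff.2 fun i => Fin.cases measurable_fst
    (fun j => (measurable_pi_apply j).comp measurable_snd) i

theorem integral_pi_fin_succ {n : ℕ} (μ : Fin (n + 1) → Measure α) [∀ i, SigmaFinite (μ i)]
    {g : (Fin (n + 1) → α) → ℝ} (hg : Integrable g (Measure.pi μ)) :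
    ∫ y, g y ∂Measure.pi μ =
      ∫ x, ∫ y, g (Fin.cons x y) ∂Measure.pi (fun i => μ i.succ) ∂μ 0 := by
  set e := (MeasurableEquiv.piFinSuccAbove (fun _ => α) 0).symm
  have he : MeasurePreserving e _ _ := (measurePreserving_piFinSuccAbove μ 0).symm
  rw [← he.integral_comp', integral_prod (fun z => g (e z))
    ((he.integrable_comp_emb e.measurableEmbedding).2 hg)]
  simp_rw [e, MeasurableEquiv.piFinSuccAbove_symm_apply, Fin.insertNthEquiv, Equiv.coe_fn_mk,
    Fin.insertNth_zero', Fin.zero_succAbove]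

variable {ι : Type*} [Fintype ι] {w : α → ℝ} {g : (ι → α) → ℝ} {D : ℝ}

theorem integrable_pi_of_abs_le_mul_prod {μ : ι → Measure α} [∀ i, SigmaFinite (μ i)]
    (hw : ∀ i, Integrable w (μ i)) (hg : Measurable g) (hgw : ∀ y, |g y| ≤ D * ∏ i, w (y i)) :
    Integrable g (Measure.pi μ) :=
  ((Integrable.fintype_prod hw).const_mul D).mono' hg.aestronglyMeasurable
    (ae_of_all _ hgw)

theorem abs_integral_pi_le_mul_pow {m : Measure α} [SigmaFinite m] (hw : Integrable w m)
    (hgw : ∀ y, |g y| ≤ D * ∏ i, w (y i)) :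
    |∫ y, g y ∂Measure.pi (fun _ => m)| ≤ D * (∫ x, w x ∂m) ^ Fintype.card ι := by
  rw [← integral_fintype_prod_eq_pow, ← integral_const_mul]
  exact abs_integral_le_integral_abs.trans <|
    integral_mono_of_nonneg (ae_of_all _ fun _ => abs_nonneg _)
      ((Integrable.fintype_prod fun _ => hw).const_mul D) (ae_of_all _ hgw)

end PiIntegral

section ProductWeight

variable {α : Type*} {w : α → ℝ} {D : ℝ} {n : ℕ}

theorem abs_cons_le_mul_prod {g : (Fin (n + 1) → α) → ℝ} (hgw : ∀ y, |g y| ≤ D * ∏ i, w (y i))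
    (x : α) (y : Fin n → α) : |g (Fin.cons x y)| ≤ D * w x * ∏ i, w (y i) := by
  simpa [Fin.prod_univ_succ, mul_assoc] using hgw (Fin.cons x y)

theorem abs_sub_cons_zero_le [Zero α] {φ : (Fin (n + 1) → α) → ℝ} (hw : ∀ x, 1 ≤ w x)
    (hw0 : w 0 = 1) (hD : 0 ≤ D) (hφ : ∀ x, |φ x| ≤ D * ∏ i, w (x i)) (x : α) (y : Fin n → α) :
    |φ (Fin.cons x y) - φ (Fin.cons 0 y)| ≤ 2 * D * w x * ∏ i, w (y i) := by
  have hx := abs_cons_le_mul_prod hφ x y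
  have h0 := abs_cons_le_mul_prod hφ 0 y
  rw [hw0, mul_one] at h0
  have hy : 0 ≤ D * ∏ i, w (y i) :=
    mul_nonneg hD (Finset.prod_nonneg fun i _ => zero_le_one.trans (hw _))
  calc _ ≤ |φ (Fin.cons x y)| + |φ (Fin.cons 0 y)| := abs_sub _ _
    _ ≤ D * w x * ∏ i, w (y i) + D * ∏ i, w (y i) := add_le_add hx h0
    _ ≤ 2 * D * w x * ∏ i, w (y i) := by nlinarith [hw x]

end ProductWeight

section PiDifference

variable {α : Type*} [MeasurableSpace α] {w : α → ℝ} {B D : ℝ} {n : ℕ}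

theorem abs_integral_pi_cons_le {m : Measure α} [SigmaFinite m] (hw : 0 ≤ w)
    (hwm : Integrable w m) (hB : ∫ x, w x ∂m ≤ B) (hD : 0 ≤ D) {g : (Fin (n + 1) → α) → ℝ}
    (hgw : ∀ y, |g y| ≤ D * ∏ i, w (y i)) (x : α) :
    |∫ y, g (Fin.cons x y) ∂Measure.pi fun _ => m| ≤ D * B ^ n * w x := by
  refine (abs_integral_pi_le_mul_pow hwm (abs_cons_le_mul_prod hgw x)).trans ?_
  rw [Fintype.card_fin]
  calc D * w x * (∫ x, w x ∂m) ^ n ≤ D * w x * B ^ n :=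
        mul_le_mul_of_nonneg_left (pow_le_pow_left₀ (integral_nonneg hw) hB n)
          (mul_nonneg hD (hw x))
    _ = D * B ^ n * w x := by ring

theorem integrable_integral_pi_cons {m m' : Measure α} [SigmaFinite m'] (hw : 0 ≤ w)
    (hwm : Integrable w m) (hwm' : Integrable w m') (hB : ∫ x, w x ∂m' ≤ B) (hD : 0 ≤ D)
    {g : (Fin (n + 1) → α) → ℝ} (hg : Measurable g) (hgw : ∀ y, |g y| ≤ D * ∏ i, w (y i)) :
    Integrable (fun x => ∫ y, g (Fin.cons x y) ∂Measure.pi fun _ => m') m :=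
  (hwm.const_mul _).mono'
    ((hg.comp measurable_fin_cons).stronglyMeasurable.integral_prod_right').aestronglyMeasurable
    (ae_of_all _ (abs_integral_pi_cons_le hw hwm' hB hD hgw))

variable {m₁ m₂ : Measure α} [IsFiniteMeasure m₁] [IsFiniteMeasure m₂]

theorem abs_integral_pi_sub_le (hw : 0 ≤ w) (hw₁ : Integrable w m₁) (hw₂ : Integrable w m₂)
    (hB₁ : ∫ x, w x ∂m₁ ≤ B) (hB₂ : ∫ x, w x ∂m₂ ≤ B) {g : (Fin n → α) → ℝ} (hg : Measurable g)
    (hD : 0 ≤ D) (hgw : ∀ y, |g y| ≤ D * ∏ i, w (y i)) :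
    |∫ y, g y ∂Measure.pi (fun _ => m₂) - ∫ y, g y ∂Measure.pi (fun _ => m₁)| ≤
      n * D * B ^ (n - 1) * ∫ x, w x ∂mdiff m₂ m₁ := by
  induction n generalizing D with
  | zero =>
    simp [Measure.pi_of_empty (fun _ : Fin 0 => m₁), Measure.pi_of_empty (fun _ : Fin 0 => m₂)]
  | succ n ih =>
    set H : Measure α → α → ℝ := fun m x => ∫ y, g (Fin.cons x y) ∂Measure.pi fun _ => m
    set I := ∫ x, w x ∂mdiff m₂ m₁
    have hH₁ := integrable_integral_pi_cons (m := m₁) hw hw₁ hw₁ hB₁ hD hg hgw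
    have hH₂₁ := integrable_integral_pi_cons (m := m₁) hw hw₁ hw₂ hB₂ hD hg hgw
    have hH₂ := integrable_integral_pi_cons (m := m₂) hw hw₂ hw₂ hB₂ hD hg hgw
    have hsplit : ∀ (m : Measure α) [SigmaFinite m], Integrable w m →
        ∫ y, g y ∂Measure.pi (fun _ => m) = ∫ x, H m x ∂m := fun m _ hwm =>
      integral_pi_fin_succ _ (integrable_pi_of_abs_le_mul_prod (fun _ => hwm) hg hgw)
    have houter : |∫ x, H m₂ x ∂m₂ - ∫ x, H m₂ x ∂m₁| ≤ D * B ^ n * I :=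
      calc _ ≤ ∫ x, |H m₂ x| ∂mdiff m₂ m₁ := abs_integral_sub_integral_le_integral_mdiff hH₂₁ hH₂
        _ ≤ ∫ x, D * B ^ n * w x ∂mdiff m₂ m₁ :=
          integral_mono_of_nonneg (ae_of_all _ fun _ => abs_nonneg _)
            ((integrable_mdiff hw₁ hw₂).const_mul _)
            (ae_of_all _ (abs_integral_pi_cons_le hw hw₂ hB₂ hD hgw))
        _ = D * B ^ n * I := integral_const_mul _ _
    have hinner : |∫ x, H m₂ x ∂m₁ - ∫ x, H m₁ x ∂m₁| ≤ n * D * B ^ (n - 1) * I * B := by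
      rw [← integral_sub hH₂₁ hH₁]
      have hind : ∀ x, |H m₂ x - H m₁ x| ≤ n * D * B ^ (n - 1) * I * w x := fun x =>
        (ih (hg.comp measurable_fin_cons |>.comp measurable_prodMk_left) (mul_nonneg hD (hw x))
          (abs_cons_le_mul_prod hgw x)).trans_eq (by ring)
      calc _ ≤ ∫ x, |H m₂ x - H m₁ x| ∂m₁ := abs_integral_le_integral_abs
        _ ≤ ∫ x, n * D * B ^ (n - 1) * I * w x ∂m₁ :=
          integral_mono_of_nonneg (ae_of_all _ fun _ => abs_nonneg _) (hw₁.const_mul _)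
            (ae_of_all _ hind)
        _ = n * D * B ^ (n - 1) * I * ∫ x, w x ∂m₁ := integral_const_mul _ _
        _ ≤ n * D * B ^ (n - 1) * I * B := by
          have := integral_nonneg (μ := mdiff m₂ m₁) hw
          have := (integral_nonneg hw).trans hB₁
          gcongr
    have hpow : (n : ℝ) * B ^ (n - 1) * B = n * B ^ n := by
      rcases n with _ | n
      · simp
      · rw [Nat.add_sub_cancel, mul_assoc, ← pow_succ]
    rw [hsplit m₂ hw₂, hsplit m₁ hw₁, ← sub_add_sub_cancel _ (∫ x, H m₂ x ∂m₁)]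
    calc _ ≤ D * B ^ n * I + n * D * B ^ (n - 1) * I * B :=
          (abs_add_le _ _).trans (add_le_add houter hinner)
      _ = ((n + 1 : ℕ) : ℝ) * D * B ^ (n + 1 - 1) * I := by
        push_cast
        linear_combination D * I * hpow

end PiDifference

theorem exists_abs_le_mul_prod_of_symmetric {E : Type*} [NormedAddCommGroup E] [ProperSpace E]
    {k : ℕ} {φ : (Fin (k + 1) → E) → ℝ} (hφ : Continuous φ)
    (hsym : ∀ (e : Equiv.Perm (Fin (k + 1))) (x : Fin (k + 1) → E), φ (x ∘ e) = φ x)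
    {w : E → ℝ} (hw : ∀ x, 1 ≤ w x) {M : ℝ} (hM : ∀ x, M ≤ ‖x 0‖ → |φ x| ≤ ∏ i, w (x i)) :
    ∃ C, 0 ≤ C ∧ ∀ x, |φ x| ≤ C * ∏ i, w (x i) := by
  obtain ⟨C₀, hC₀⟩ := (isCompact_univ_pi fun _ : Fin (k + 1) =>
    isCompact_closedBall (0 : E) M).exists_bound_of_continuousOn hφ.continuousOn
  refine ⟨max C₀ 1, zero_le_one.trans (le_max_right _ _), fun x => ?_⟩
  have hprod : 1 ≤ ∏ i, w (x i) := Finset.one_le_prod fun i _ => hw (x i)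
  by_cases hx : ∀ i, ‖x i‖ ≤ M
  · calc |φ x| ≤ C₀ := hC₀ x fun i _ => mem_closedBall_zero_iff.2 (hx i)
      _ ≤ max C₀ 1 * 1 := by rw [mul_one]; exact le_max_left _ _
      _ ≤ max C₀ 1 * ∏ i, w (x i) :=
        mul_le_mul_of_nonneg_left hprod (zero_le_one.trans (le_max_right _ _))
  · obtain ⟨i, hi⟩ := not_forall.1 hx
    have h := hM (x ∘ Equiv.swap 0 i) (by simpa using (not_le.1 hi).le)
    simp only [hsym, Function.comp_apply, Equiv.prod_comp (Equiv.swap 0 i) fun j => w (x j)] at h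
    exact h.trans (le_mul_of_one_le_left (zero_le_one.trans hprod) (le_max_right _ _))

section Moments

variable {E : Type*} [NormedAddCommGroup E] {ℓ : ℝ}

theorem ofReal_norm_rpow_le_two_rpow_mul (hℓ : 0 ≤ ℓ) (a b : E) :
    ENNReal.ofReal (‖a‖ ^ ℓ) ≤
      2 ^ ℓ * (ENNReal.ofReal (dist a b ^ ℓ) + ENNReal.ofReal (‖b‖ ^ ℓ)) := by
  rw [← ENNReal.ofReal_rpow_of_nonneg (norm_nonneg _) hℓ,
    ← ENNReal.ofReal_rpow_of_nonneg dist_nonneg hℓ,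
    ← ENNReal.ofReal_rpow_of_nonneg (norm_nonneg _) hℓ]
  refine (ENNReal.rpow_le_rpow ?_ hℓ).trans (ENNReal.add_rpow_le_two_rpow_mul_rpow_add_rpow _ _ hℓ)
  rw [← ENNReal.ofReal_add dist_nonneg (norm_nonneg _)]
  exact ENNReal.ofReal_le_ofReal (norm_le_norm_sub_add a b |>.trans_eq (by rw [dist_eq_norm]))

theorem one_add_norm_rpow_half_le (x : E) : 1 + ‖x‖ ^ (ℓ / 2) ≤ 2 + ‖x‖ ^ ℓ := by
  have hsq : ‖x‖ ^ ℓ = (‖x‖ ^ (ℓ / 2)) ^ 2 := by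
    rw [← Real.rpow_natCast, ← Real.rpow_mul (norm_nonneg x)]
    norm_num
  nlinarith [sq_nonneg (‖x‖ ^ (ℓ / 2) - 1)]

variable [MeasurableSpace E] [OpensMeasurableSpace E]

theorem lintegral_rpow_norm_le_of_mem_couplings (hℓ : 0 ≤ ℓ) {m μ : Measure E}
    {ρ : Measure (E × E)} (hρ : ρ ∈ couplings m μ) :
    ∫⁻ x, ENNReal.ofReal (‖x‖ ^ ℓ) ∂m ≤
      2 ^ ℓ * (∫⁻ p, ENNReal.ofReal (dist p.1 p.2 ^ ℓ) ∂ρ + ∫⁻ x, ENNReal.ofReal (‖x‖ ^ ℓ) ∂μ) := by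
  obtain ⟨-, hm, hμ⟩ := hρ
  have hmeas : Measurable fun x : E => ENNReal.ofReal (‖x‖ ^ ℓ) := by fun_prop
  have hmeas₂ : Measurable fun p : E × E => ENNReal.ofReal (‖p.2‖ ^ ℓ) := by fun_prop
  rw [← hm, ← hμ, lintegral_map hmeas measurable_fst, lintegral_map hmeas measurable_snd,
    ← lintegral_add_right _ hmeas₂, ← lintegral_const_mul' _ _ (by simp)]
  exact lintegral_mono fun p => ofReal_norm_rpow_le_two_rpow_mul hℓ p.1 p.2

theorem lintegral_rpow_norm_le_of_mem_ball (hℓ : 0 < ℓ) {μ m : Measure E} {r : ℝ}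
    (hm : m ∈ ball ℓ μ r) :
    ∫⁻ x, ENNReal.ofReal (‖x‖ ^ ℓ) ∂m ≤
      2 ^ ℓ * (ENNReal.ofReal r ^ max ℓ 1 + ∫⁻ x, ENNReal.ofReal (‖x‖ ^ ℓ) ∂μ) := by
  have hW := hm.2
  simp only [Wl, if_neg hℓ.ne', iInf_lt_iff] at hW
  obtain ⟨ρ, hρ, hcost⟩ := hW
  have hp : 0 < max ℓ 1 := lt_max_of_lt_right one_pos
  have hcost' : ∫⁻ p, ENNReal.ofReal (dist p.1 p.2 ^ ℓ) ∂ρ < ENNReal.ofReal r ^ max ℓ 1 := by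
    simpa [← ENNReal.rpow_mul, hp.ne'] using ENNReal.rpow_lt_rpow hcost hp
  exact (lintegral_rpow_norm_le_of_mem_couplings hℓ.le hρ).trans (by gcongr)

theorem exists_integral_one_add_norm_rpow_half_le_of_mem_ball (hℓ : 0 < ℓ) {μ : Measure E}
    (hμ : MemP ℓ μ) (r : ℝ) :
    ∃ B, ∀ m ∈ ball ℓ μ r, Integrable (fun x => 1 + ‖x‖ ^ (ℓ / 2)) m ∧
      ∫ x, 1 + ‖x‖ ^ (ℓ / 2) ∂m ≤ B := by
  set Bv := 2 + 2 ^ ℓ * (ENNReal.ofReal r ^ max ℓ 1 + ∫⁻ x, ENNReal.ofReal (‖x‖ ^ ℓ) ∂μ)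
  have hBv : Bv ≠ ⊤ := by
    have := hμ.2.ne
    have : ENNReal.ofReal r ^ max ℓ 1 ≠ ⊤ := ENNReal.rpow_ne_top_of_nonneg (by positivity) (by simp)
    simp_all [Bv, ENNReal.mul_eq_top]
  refine ⟨Bv.toReal, fun m hm => ?_⟩
  have : IsProbabilityMeasure m := hm.1.1
  have hw0 : 0 ≤ fun x : E => 1 + ‖x‖ ^ (ℓ / 2) := fun x => by positivity
  have hwm : Measurable fun x : E => 1 + ‖x‖ ^ (ℓ / 2) := by fun_prop
  have hlint : ∫⁻ x, ENNReal.ofReal (1 + ‖x‖ ^ (ℓ / 2)) ∂m ≤ Bv :=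
    calc _ ≤ ∫⁻ x, 2 + ENNReal.ofReal (‖x‖ ^ ℓ) ∂m := lintegral_mono fun x => by
          rw [← ENNReal.ofReal_ofNat 2, ← ENNReal.ofReal_add (by norm_num) (by positivity)]
          exact ENNReal.ofReal_le_ofReal (one_add_norm_rpow_half_le x)
      _ = 2 + ∫⁻ x, ENNReal.ofReal (‖x‖ ^ ℓ) ∂m := by
          rw [lintegral_add_left measurable_const, lintegral_const, measure_univ, mul_one]
      _ ≤ Bv := add_le_add le_rfl (lintegral_rpow_norm_le_of_mem_ball hℓ hm)
  have hint : Integrable (fun x => 1 + ‖x‖ ^ (ℓ / 2)) m :=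
    ⟨hwm.aestronglyMeasurable, (hasFiniteIntegral_iff_ofReal (ae_of_all _ hw0)).2
      (hlint.trans_lt hBv.lt_top)⟩
  refine ⟨hint, ?_⟩
  rw [integral_eq_lintegral_of_nonneg_ae (ae_of_all _ hw0) hwm.aestronglyMeasurable]
  exact ENNReal.toReal_mono hBv hlint

end Moments

theorem stmt18_general {d : ℕ} (ℓ : ℝ) (hℓ : 0 < ℓ) (k : ℕ)
    (φ : (Fin (k + 1) → Euc d) → ℝ) (hφc : Continuous φ)
    (hsym : ∀ (e : Equiv.Perm (Fin (k + 1))) (x : Fin (k + 1) → Euc d), φ (x ∘ e) = φ x)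
    (hlim : ∀ ε > (0:ℝ), ∃ M : ℝ, ∀ x : Fin (k + 1) → Euc d, M ≤ ‖x 0‖ →
      |φ x| ≤ ε * ∏ i, (1 + ‖x i‖ ^ (ℓ / 2)))
    (μ : Measure (Euc d)) (hμ : MemP ℓ μ) (r : ℝ) :
    ∃ Ct : ℝ, ∀ m₁ ∈ ball ℓ μ r, ∀ m₂ ∈ ball ℓ μ r, ∀ x₁ : Euc d,
      |USderiv k φ m₂ x₁ - USderiv k φ m₁ x₁| ≤
        Ct * (∫ x, (1 + ‖x‖ ^ (ℓ / 2)) ∂(mdiff m₂ m₁)) * (1 + ‖x₁‖ ^ (ℓ / 2)) := by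
  set w : Euc d → ℝ := fun x => 1 + ‖x‖ ^ (ℓ / 2)
  have hw : ∀ x, 1 ≤ w x := fun x => le_add_of_nonneg_right (by positivity)
  have hw0 : w 0 = 1 := by simp [w, Real.zero_rpow (by positivity : ℓ / 2 ≠ 0)]
  obtain ⟨M, hM⟩ := hlim 1 one_pos
  obtain ⟨C, hC, hφ⟩ := exists_abs_le_mul_prod_of_symmetric hφc hsym hw (M := M)
    (by simpa only [one_mul] using hM)
  obtain ⟨B, hB⟩ := exists_integral_one_add_norm_rpow_half_le_of_mem_ball hℓ hμ r
  refine ⟨(k + 1) * (k * (2 * C) * B ^ (k - 1)), fun m₁ hm₁ m₂ hm₂ x₁ => ?_⟩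
  have := hm₁.1.1
  have := hm₂.1.1
  obtain ⟨hw₁, hB₁⟩ := hB m₁ hm₁
  obtain ⟨hw₂, hB₂⟩ := hB m₂ hm₂
  have hcons (x : Euc d) :
      Continuous fun y : Fin k → Euc d => (Fin.cons x y : Fin (k + 1) → Euc d) :=
    continuous_const.finCons continuous_id
  have hdiff := abs_integral_pi_sub_le (fun x => zero_le_one.trans (hw x)) hw₁ hw₂ hB₁ hB₂
    ((hφc.comp (hcons x₁)).sub (hφc.comp (hcons 0))).measurable (by positivity)
    (abs_sub_cons_zero_le hw hw0 hC hφ x₁)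
  rw [USderiv, USderiv, ← mul_sub, abs_mul, abs_of_nonneg (by positivity)]
  exact (mul_le_mul_of_nonneg_left hdiff (by positivity)).trans_eq (by ring)

/-- RU6 with `α = 1` for the U-statistic functional. -/
theorem stmt18 {d : ℕ} (ℓ : ℝ) (hℓ : 0 < ℓ) (k : ℕ) (hk : 1 ≤ k)
    (φ : (Fin (k + 1) → Euc d) → ℝ) (hφc : Continuous φ)
    (hsym : ∀ (e : Equiv.Perm (Fin (k + 1))) (x : Fin (k + 1) → Euc d), φ (x ∘ e) = φ x)
    (hlim : ∀ ε > (0:ℝ), ∃ M : ℝ, ∀ x : Fin (k + 1) → Euc d, M ≤ ‖x 0‖ →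
      |φ x| ≤ ε * ∏ i, (1 + ‖x i‖ ^ (ℓ / 2)))
    (μ : Measure (Euc d)) (hμ : MemP ℓ μ) (r : ℝ) (hr : 0 < r) :
    ∃ Ct : ℝ, ∀ m₁ ∈ ball ℓ μ r, ∀ m₂ ∈ ball ℓ μ r, ∀ x₁ : Euc d,
      |USderiv k φ m₂ x₁ - USderiv k φ m₁ x₁| ≤
        Ct * (∫ x, (1 + ‖x‖ ^ (ℓ / 2)) ∂(mdiff m₂ m₁)) * (1 + ‖x₁‖ ^ (ℓ / 2)) :=
  stmt18_general ℓ hℓ k φ hφc hsym hlim μ hμ r
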